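/- Let G be a compact topological group with Haar probability measure ν, E a nontrivial real Banach space, and λ : G → L(E,E) a continuous nearly multiplicative pseudo-representation, i.e. λ is unital and c(λ) ≤ (1/9)·b(λ)^{−2}. Then every λ(g) is invertible, the multiplicative average λ̄ is defined, and λ̄ is itself nearly multiplicative: λ̄ is unital and c(λ̄) ≤ (1/9)·b(λ̄)^{−2}. -/

import Mathlib

open MeasureTheory

/-- The multiplicative average of a pseudo-representation `λ` of a compact group `G`
on a Banach space `E`, relative to a (Haar probability) measure `ν`:
`λ̄(g) := ∫ λ(gk) ∘ λ(k)⁻¹ dν(k)` (Bochner integral). -/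
noncomputable def mulAvg {G : Type*} [Group G] [TopologicalSpace G]
    [MeasurableSpace G] {E : Type*} [NormedAddCommGroup E] [NormedSpace ℝ E]
    (ν : Measure G) (lam : G → E →L[ℝ] E) : G → E →L[ℝ] E :=
  fun g => ∫ k, (lam (g * k)).comp (lam k).inverse ∂ν

/-- `b(λ) := sup_{g} ‖λ(g)‖`. -/
noncomputable def bSup {G : Type*} [Group G] {E : Type*} [NormedAddCommGroup E]
    [NormedSpace ℝ E] (lam : G → E →L[ℝ] E) : ℝ :=
  ⨆ g : G, ‖lam g‖

/-- `c(λ) := sup_{g',g} ‖λ(g'g) − λ(g')∘λ(g)‖`, the multiplicativity defect. -/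
noncomputable def cSup {G : Type*} [Group G] {E : Type*} [NormedAddCommGroup E]
    [NormedSpace ℝ E] (lam : G → E →L[ℝ] E) : ℝ :=
  ⨆ p : G × G, ‖lam (p.1 * p.2) - (lam p.1).comp (lam p.2)‖

/-!
Since `‖λ(g g⁻¹) - λ(g) λ(g⁻¹)‖ ≤ c < 1`, both `λ(g) λ(g⁻¹)` and `λ(g⁻¹) λ(g)` are invertible,
hence so is `λ(g)`, and `λ(g⁻¹)` is an approximate inverse giving `‖λ(g)⁻¹‖ ≤ b / (1 - c)`.
Every integrand `λ(gk) λ(k)⁻¹ = λ(g) + (λ(gk) - λ(g) λ(k)) λ(k)⁻¹` is then within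
`δ = c b / (1 - c)` of `λ(g)`, so `λ̄` is within `δ` of `λ`. By left invariance of `ν`,
`λ̄(g'g) - λ̄(g') λ̄(g)` is the integral of `(A - λ̄(g')) (B - λ(g))`, where
`A(k) = λ(g'gk) λ(gk)⁻¹` and `B(k) = λ(gk) λ(k)⁻¹` are the two factors of the integrand of
`λ̄(g'g)`; this is at most `2δ · δ`, which is small enough for the constant `1/9`.
-/

theorem isUnit_of_isUnit_mul_of_isUnit_mul {M : Type*} [Monoid M] {a b : M}
    (hab : IsUnit (a * b)) (hba : IsUnit (b * a)) : IsUnit a := by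
  obtain ⟨u, hu⟩ := hab
  obtain ⟨v, hv⟩ := hba
  refine isUnit_iff_exists_and_exists.2 ⟨⟨b * ↑u⁻¹, ?_⟩, ⟨↑v⁻¹ * b, ?_⟩⟩
  · rw [← mul_assoc, ← hu, Units.mul_inv]
  · rw [mul_assoc, ← hv, Units.inv_mul]

section NormedRing

variable {R : Type*} [NormedRing R]

theorem isUnit_of_norm_one_sub_lt_one [HasSummableGeomSeries R] {x : R} (h : ‖1 - x‖ < 1) :
    IsUnit x := by
  simpa using isUnit_one_sub_of_norm_lt_one h

/-- From `a⁻¹ = x + a⁻¹ (1 - a x)`. -/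
theorem norm_inverse_le_of_norm_one_sub_mul_le {a x : R} (ha : IsUnit a) {c : ℝ} (hc : c < 1)
    (h : ‖1 - a * x‖ ≤ c) : ‖Ring.inverse a‖ ≤ ‖x‖ / (1 - c) := by
  have hexp : Ring.inverse a = x + Ring.inverse a * (1 - a * x) := by
    rw [mul_sub, mul_one, ← mul_assoc, Ring.inverse_mul_cancel _ ha, one_mul, add_sub_cancel]
  have hle : ‖Ring.inverse a‖ ≤ ‖x‖ + ‖Ring.inverse a‖ * c :=
    calc ‖Ring.inverse a‖ ≤ ‖x‖ + ‖Ring.inverse a‖ * ‖1 - a * x‖ := by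
          conv_lhs => rw [hexp]
          exact (norm_add_le _ _).trans (add_le_add_right (norm_mul_le _ _) _)
      _ ≤ ‖x‖ + ‖Ring.inverse a‖ * c := by gcongr
  rw [le_div_iff₀ (sub_pos.2 hc)]
  linarith

theorem continuous_ringInverse_comp [HasSummableGeomSeries R] {X : Type*} [TopologicalSpace X]
    {f : X → R} (hf : Continuous f) (hunit : ∀ x, IsUnit (f x)) :
    Continuous fun x => Ring.inverse (f x) :=
  continuous_iff_continuousAt.2 fun x =>
    (hunit x).unit_spec ▸ (NormedRing.inverse_continuousAt (hunit x).unit) |>.comp hf.continuousAt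

end NormedRing

section Defect

variable {G R : Type*} [Group G] [NormedRing R] {lam : G → R} {b c : ℝ}

theorem norm_one_sub_mul_le_of_mul_eq_one (hunital : lam 1 = 1)
    (hc : ∀ g h, ‖lam (g * h) - lam g * lam h‖ ≤ c) {g h : G} (hgh : g * h = 1) :
    ‖1 - lam g * lam h‖ ≤ c := by
  simpa [hgh, hunital] using hc g h

theorem isUnit_of_defect_lt_one [HasSummableGeomSeries R] (hunital : lam 1 = 1)
    (hc : ∀ g h, ‖lam (g * h) - lam g * lam h‖ ≤ c) (hc1 : c < 1) (g : G) : IsUnit (lam g) :=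
  isUnit_of_isUnit_mul_of_isUnit_mul
    (isUnit_of_norm_one_sub_lt_one <|
      (norm_one_sub_mul_le_of_mul_eq_one hunital hc (mul_inv_cancel g)).trans_lt hc1)
    (isUnit_of_norm_one_sub_lt_one <|
      (norm_one_sub_mul_le_of_mul_eq_one hunital hc (inv_mul_cancel g)).trans_lt hc1)

theorem norm_mul_inverse_sub_le [HasSummableGeomSeries R] (hunital : lam 1 = 1)
    (hb : ∀ g, ‖lam g‖ ≤ b) (hc : ∀ g h, ‖lam (g * h) - lam g * lam h‖ ≤ c) (hc1 : c < 1)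
    (g k : G) : ‖lam (g * k) * Ring.inverse (lam k) - lam g‖ ≤ c * (b / (1 - c)) := by
  have hk := isUnit_of_defect_lt_one hunital hc hc1 k
  have hinv : ‖Ring.inverse (lam k)‖ ≤ b / (1 - c) :=
    (norm_inverse_le_of_norm_one_sub_mul_le hk hc1
      (norm_one_sub_mul_le_of_mul_eq_one hunital hc (mul_inv_cancel k))).trans
      (div_le_div_of_nonneg_right (hb _) (sub_pos.2 hc1).le)
  have hfac : lam (g * k) * Ring.inverse (lam k) - lam g
      = (lam (g * k) - lam g * lam k) * Ring.inverse (lam k) := by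
    rw [sub_mul, mul_assoc, Ring.mul_inverse_cancel _ hk, mul_one]
  rw [hfac]
  exact (norm_mul_le _ _).trans (mul_le_mul (hc g k) hinv (norm_nonneg _)
    ((norm_nonneg _).trans (hc 1 1)))

end Defect

section ProbabilityIntegral

variable {α : Type*} [MeasurableSpace α] {μ : Measure α} [IsProbabilityMeasure μ]

theorem norm_integral_sub_le_of_forall_norm_sub_le {E : Type*} [NormedAddCommGroup E]
    [NormedSpace ℝ E] [CompleteSpace E] {f : α → E} (hf : Integrable f μ) {a : E} {δ : ℝ}
    (h : ∀ x, ‖f x - a‖ ≤ δ) : ‖∫ x, f x ∂μ - a‖ ≤ δ := by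
  have hsub : ∫ x, f x ∂μ - a = ∫ x, (f x - a) ∂μ := by
    rw [integral_sub hf (integrable_const a), integral_const, probReal_univ, one_smul]
  simpa [hsub] using norm_integral_le_of_norm_le_const (μ := μ) (ae_of_all _ h)

/-- The covariance identity `∫ (f - ∫ f) (g - a) = ∫ f g - (∫ f)(∫ g)`, valid for any `a`. -/
theorem norm_integral_mul_sub_mul_integral_le {A : Type*} [NormedRing A] [NormedAlgebra ℝ A]
    [CompleteSpace A] {f g : α → A} (hf : Integrable f μ) (hg : Integrable g μ)
    (hfg : Integrable (fun x => f x * g x) μ) {a : A} {ε δ : ℝ}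
    (hfε : ∀ x, ‖f x - ∫ y, f y ∂μ‖ ≤ ε) (hgδ : ∀ x, ‖g x - a‖ ≤ δ) :
    ‖∫ x, f x * g x ∂μ - (∫ x, f x ∂μ) * ∫ x, g x ∂μ‖ ≤ ε * δ := by
  set F := ∫ x, f x ∂μ
  have hcov : ∫ x, (f x - F) * (g x - a) ∂μ = ∫ x, f x * g x ∂μ - F * ∫ x, g x ∂μ := by
    have h₁ : Integrable (fun x => f x * g x - F * g x) μ := hfg.sub (hg.const_mul F)
    have h₂ : Integrable (fun x => f x * a - F * a) μ := (hf.mul_const a).sub (integrable_const _)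
    simp only [mul_sub, sub_mul]
    rw [integral_sub h₁ h₂,
      integral_sub hfg (hg.const_mul F), integral_sub (hf.mul_const a) (integrable_const _),
      integral_mul_const_of_integrable hf, integral_const_mul_of_integrable hg, integral_const,
      probReal_univ, one_smul, sub_self, sub_zero]
  have hbound : ∀ x, ‖(f x - F) * (g x - a)‖ ≤ ε * δ := fun x =>
    (norm_mul_le _ _).trans
      (mul_le_mul (hfε x) (hgδ x) (norm_nonneg _) ((norm_nonneg _).trans (hfε x)))
  simpa [hcov] using norm_integral_le_of_norm_le_const (μ := μ) (ae_of_all _ hbound)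

end ProbabilityIntegral

theorem continuous_mul_inverse_comp {G R : Type*} [Group G] [TopologicalSpace G]
    [IsTopologicalGroup G] [NormedRing R] [HasSummableGeomSeries R] {lam : G → R}
    (hcont : Continuous lam) (hunit : ∀ g, IsUnit (lam g)) (g h : G) :
    Continuous fun k => lam (g * k) * Ring.inverse (lam (h * k)) :=
  (hcont.comp (continuous_const_mul g)).mul
    ((continuous_ringInverse_comp hcont hunit).comp (continuous_const_mul h))

theorem mulAvg_eq_integral_mul_inverse {G : Type*} [Group G] [TopologicalSpace G]
    [MeasurableSpace G] {E : Type*} [NormedAddCommGroup E] [NormedSpace ℝ E]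
    (ν : Measure G) (lam : G → E →L[ℝ] E) (g : G) :
    mulAvg ν lam g = ∫ k, lam (g * k) * Ring.inverse (lam k) ∂ν := by
  simp [mulAvg, ContinuousLinearMap.ringInverse_eq_inverse, ContinuousLinearMap.mul_def]

theorem mulAvg_one {G : Type*} [Group G] [TopologicalSpace G] [MeasurableSpace G]
    {ν : Measure G} [IsProbabilityMeasure ν] {E : Type*} [NormedAddCommGroup E]
    [NormedSpace ℝ E] [CompleteSpace E] {lam : G → E →L[ℝ] E} (hunit : ∀ g, IsUnit (lam g)) :
    mulAvg ν lam 1 = ContinuousLinearMap.id ℝ E := by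
  simp [mulAvg_eq_integral_mul_inverse, Ring.mul_inverse_cancel _ (hunit _),
    ContinuousLinearMap.one_def]

section MulAvg

variable {G : Type*} [Group G] [TopologicalSpace G] [IsTopologicalGroup G] [CompactSpace G]
  [MeasurableSpace G] [BorelSpace G] {ν : Measure G} [IsProbabilityMeasure ν]
  {E : Type*} [NormedAddCommGroup E] [NormedSpace ℝ E] [CompleteSpace E] {lam : G → E →L[ℝ] E}

theorem norm_mulAvg_sub_le (hcont : Continuous lam) (hunit : ∀ g, IsUnit (lam g)) {δ : ℝ}
    (hδ : ∀ g k, ‖lam (g * k) * Ring.inverse (lam k) - lam g‖ ≤ δ) (g : G) :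
    ‖mulAvg ν lam g - lam g‖ ≤ δ := by
  rw [mulAvg_eq_integral_mul_inverse]
  refine norm_integral_sub_le_of_forall_norm_sub_le ?_ (hδ g)
  simpa using (continuous_mul_inverse_comp hcont hunit g 1).integrable_of_hasCompactSupport
    (.of_compactSpace _)

theorem norm_mulAvg_mul_sub_le [ν.IsMulLeftInvariant] (hcont : Continuous lam)
    (hunit : ∀ g, IsUnit (lam g)) {δ : ℝ}
    (hδ : ∀ g k, ‖lam (g * k) * Ring.inverse (lam k) - lam g‖ ≤ δ) (g' g : G) :
    ‖mulAvg ν lam (g' * g) - mulAvg ν lam g' * mulAvg ν lam g‖ ≤ 2 * δ * δ := by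
  have hint : ∀ a b : G, Integrable (fun k => lam (a * k) * Ring.inverse (lam (b * k))) ν :=
    fun a b => (continuous_mul_inverse_comp hcont hunit a b).integrable_of_hasCompactSupport
      (.of_compactSpace _)
  set A : G → E →L[ℝ] E := fun k => lam (g' * (g * k)) * Ring.inverse (lam (g * k))
  set B : G → E →L[ℝ] E := fun k => lam (g * k) * Ring.inverse (lam k)
  have hAint : Integrable A ν := by simpa only [A, mul_assoc] using hint (g' * g) g
  have hBint : Integrable B ν := by simpa only [B, one_mul] using hint g 1
  have hAB : (fun k => A k * B k) = fun k => lam (g' * g * k) * Ring.inverse (lam k) := by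
    funext k
    simp only [A, B]
    rw [mul_assoc, ← mul_assoc (Ring.inverse _), Ring.inverse_mul_cancel _ (hunit _), one_mul,
      mul_assoc]
  have hABint : Integrable (fun k => A k * B k) ν := by
    simpa only [hAB, one_mul] using hint (g' * g) 1
  have hA : ∫ k, A k ∂ν = mulAvg ν lam g' := by
    rw [mulAvg_eq_integral_mul_inverse]
    exact integral_mul_left_eq_self (fun k => lam (g' * k) * Ring.inverse (lam k)) g
  have hAδ : ∀ k, ‖A k - ∫ k, A k ∂ν‖ ≤ 2 * δ := fun k => by
    rw [hA, two_mul, ← sub_add_sub_cancel _ (lam g')]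
    refine (norm_add_le _ _).trans (add_le_add (hδ g' (g * k)) ?_)
    rw [norm_sub_rev]
    exact norm_mulAvg_sub_le hcont hunit hδ g'
  have hprod := norm_integral_mul_sub_mul_integral_le hAint hBint hABint hAδ (hδ g)
  rwa [hAB, hA, ← mulAvg_eq_integral_mul_inverse, ← mulAvg_eq_integral_mul_inverse] at hprod

end MulAvg

section Sup

variable {G : Type*} [Group G] {E : Type*} [NormedAddCommGroup E] [NormedSpace ℝ E]
  {lam : G → E →L[ℝ] E}

theorem norm_le_bSup (hbdd : BddAbove (Set.range fun g => ‖lam g‖)) (g : G) :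
    ‖lam g‖ ≤ bSup lam :=
  le_ciSup hbdd g

theorem norm_sub_mul_le_cSup (hbdd : BddAbove (Set.range fun g => ‖lam g‖)) (g h : G) :
    ‖lam (g * h) - lam g * lam h‖ ≤ cSup lam := by
  have hb := norm_le_bSup hbdd
  refine le_ciSup (f := fun p : G × G => ‖lam (p.1 * p.2) - (lam p.1).comp (lam p.2)‖)
    ⟨bSup lam + bSup lam * bSup lam, ?_⟩ (g, h)
  rintro _ ⟨p, rfl⟩
  exact (norm_sub_le _ _).trans <| add_le_add (hb _) <| (norm_mul_le _ _).trans <|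
    mul_le_mul (hb _) (hb _) (norm_nonneg _) ((norm_nonneg _).trans (hb 1))

theorem one_le_bSup [Nontrivial E] (hunital : lam 1 = ContinuousLinearMap.id ℝ E)
    (hbdd : BddAbove (Set.range fun g => ‖lam g‖)) : 1 ≤ bSup lam := by
  simpa [hunital] using norm_le_bSup hbdd 1

end Sup

/-- With `δ = c b / (1 - c)`, averaging gives `b̄ ≤ b + δ` and `c̄ ≤ 2 δ²`; since `c ≤ 1/9` we have
`δ ≤ (9/8) c b`, so `c̄ b̄² ≤ 2 (9/8)⁴ (c b²)² ≤ 2 (9/8)⁴ / 81 < 1/9`. -/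
theorem le_one_ninth_mul_inv_sq_of_averaging {b c b' c' : ℝ} (hb : 1 ≤ b) (hc : 0 ≤ c)
    (hcb : c ≤ 1 / 9 * (b ^ 2)⁻¹) (hb' : 1 ≤ b') (hb'le : b' ≤ b + c * (b / (1 - c)))
    (hc'le : c' ≤ 2 * (c * (b / (1 - c))) * (c * (b / (1 - c)))) :
    c' ≤ 1 / 9 * (b' ^ 2)⁻¹ := by
  have hb2 : 0 < b ^ 2 := by positivity
  have hcb2 : c * b ^ 2 ≤ 1 / 9 := by
    rwa [le_mul_inv_iff₀ hb2] at hcb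
  have hc9 : c ≤ 1 / 9 := by nlinarith
  have h1c : 0 < 1 - c := by linarith
  have hδ0 : 0 ≤ c * (b / (1 - c)) := by positivity
  have hδ : c * (b / (1 - c)) ≤ 9 / 8 * c * b := by
    rw [mul_div_assoc', div_le_iff₀ h1c]
    nlinarith [mul_nonneg hc (by linarith : (0:ℝ) ≤ b)]
  set δ := c * (b / (1 - c))
  have hb'9 : b' ≤ 9 / 8 * b := by nlinarith
  rw [le_mul_inv_iff₀ (by positivity)]
  calc c' * b' ^ 2 ≤ 2 * δ * δ * (9 / 8 * b) ^ 2 := by gcongr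
    _ ≤ 2 * (9 / 8 * c * b) * (9 / 8 * c * b) * (9 / 8 * b) ^ 2 := by gcongr
    _ = 2 * (9 / 8) ^ 4 * (c * b ^ 2) ^ 2 := by ring
    _ ≤ 2 * (9 / 8) ^ 4 * (1 / 9) ^ 2 := by gcongr
    _ ≤ 1 / 9 := by norm_num

/-- The multiplicative average of a nearly multiplicative pseudo-representation is
again nearly multiplicative (one-object case of the paper's claim following
Definition 6). -/
theorem mulAvg_nearly_multiplicative
    {G : Type*} [Group G] [TopologicalSpace G] [IsTopologicalGroup G]
    [CompactSpace G] [MeasurableSpace G] [BorelSpace G]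
    (ν : Measure G) [ν.IsHaarMeasure] [IsProbabilityMeasure ν]
    {E : Type*} [NormedAddCommGroup E] [NormedSpace ℝ E] [CompleteSpace E]
    [Nontrivial E]
    (lam : G → E →L[ℝ] E) (hcont : Continuous lam)
    (hunital : lam 1 = ContinuousLinearMap.id ℝ E)
    (hnear : cSup lam ≤ (1 / 9) * (bSup lam ^ 2)⁻¹) :
    (∀ g : G, ∃ u : E ≃L[ℝ] E, lam g = u) ∧
    mulAvg ν lam 1 = ContinuousLinearMap.id ℝ E ∧
    cSup (mulAvg ν lam) ≤ (1 / 9) * (bSup (mulAvg ν lam) ^ 2)⁻¹ := by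
  have hbdd : BddAbove (Set.range fun g => ‖lam g‖) := (isCompact_range hcont.norm).bddAbove
  have hb1 : 1 ≤ bSup lam := one_le_bSup hunital hbdd
  have hc := norm_sub_mul_le_cSup hbdd
  have hc0 : 0 ≤ cSup lam := (norm_nonneg _).trans (hc 1 1)
  have hc1 : cSup lam < 1 := hnear.trans_lt <| by
    have : (bSup lam ^ 2)⁻¹ ≤ 1 := inv_le_one_of_one_le₀ (one_le_pow₀ hb1)
    linarith
  have hunital' : lam 1 = 1 := hunital
  have hunit := isUnit_of_defect_lt_one hunital' hc hc1
  have hδ := norm_mul_inverse_sub_le hunital' (norm_le_bSup hbdd) hc hc1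
  have hbarNorm : ∀ g, ‖mulAvg ν lam g‖ ≤ bSup lam + cSup lam * (bSup lam / (1 - cSup lam)) :=
    fun g => (norm_le_norm_add_norm_sub' _ (lam g)).trans <| add_le_add (norm_le_bSup hbdd g)
      (norm_mulAvg_sub_le hcont hunit hδ g)
  have hbarOne := mulAvg_one (ν := ν) hunit
  refine ⟨fun g => ⟨ContinuousLinearEquiv.unitsEquiv ℝ E (hunit g).unit, rfl⟩, hbarOne, ?_⟩
  refine le_one_ninth_mul_inv_sq_of_averaging hb1 hc0 hnear
    (one_le_bSup hbarOne ⟨_, Set.forall_mem_range.2 hbarNorm⟩) (ciSup_le hbarNorm)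
    (ciSup_le fun p => ?_)
  exact norm_mulAvg_mul_sub_le hcont hunit hδ p.1 p.2
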